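/- Fix n ∈ ℕ, 0 < ε ≤ 1 and K ≥ 2^n·ε, and let (P, ṽ) be the packing game of the instability construction with weights w̃ (identical to w except w̃({r}) = 1 − ε). Then the allocation ỹ : P → ℝ with ỹ(r) = 1 − ε, ỹ(p_i^{(l)}) = l·K + 2^{l−2}·ε, and ỹ(q_i^{(l)}) = l·K − 2^{l−2}·ε for all l ∈ {1,…,n+2}, i ∈ {1,…,4}, is the nucleolus of (P, ṽ): ỹ(P) = ṽ(P), and θ_{ṽ}(z) ≤_lex θ_{ṽ}(ỹ) for every z : P → ℝ with z(P) = ṽ(P). -/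

import Mathlib

/-- The players of the instability construction: a root `r`, and players `p i (l)`,
`q i (l)` for levels `l ∈ {1, …, n+2}` (encoded by `Fin (n+2)`, level `= l.1 + 1`) and
`i ∈ {1, …, 4}`. -/
inductive Player (n : ℕ) : Type where
  | r : Player n
  | p : Fin (n + 2) → Fin 4 → Player n
  | q : Fin (n + 2) → Fin 4 → Player n
  deriving DecidableEq, Fintype

/-- Index set for the family `𝒮` of the instability construction. -/
inductive Idx (n : ℕ) : Type where
  | root : Idx n
  | rootP : Fin 4 → Idx n
  | pair : Fin (n + 2) → Fin 4 → Idx n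
  | quad : Fin (n + 1) → Fin 4 → Idx n
  deriving DecidableEq, Fintype

/-- The coalitions of the family `𝒮`: `{r}`; `{r, p_i^{(1)}}`; `{p_i^{(l)}, q_i^{(l)}}`;
and `{q_1^{(l)}, q_2^{(l)}, q_3^{(l)}, q_4^{(l)}, p_i^{(l+1)}}`. -/
def coal {n : ℕ} : Idx n → Finset (Player n)
  | .root => {Player.r}
  | .rootP i => {Player.r, Player.p 0 i}
  | .pair l i => {Player.p l i, Player.q l i}
  | .quad l i => {Player.q l.castSucc 0, Player.q l.castSucc 1, Player.q l.castSucc 2,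
      Player.q l.castSucc 3, Player.p l.succ i}

/-- The weights of the family `𝒮`: `rootW` on `{r}` (which is `1` for `w` and `1 − ε` for
`w̃`); `1` on `{r, p_i^{(1)}}`; `2·l·K` on `{p_i^{(l)}, q_i^{(l)}}`; and `4·l·K` on
`{q_1^{(l)}, …, q_4^{(l)}, p_i^{(l+1)}}`. -/
noncomputable def wt {n : ℕ} (K rootW : ℝ) : Idx n → ℝ
  | .root => rootW
  | .rootP _ => 1
  | .pair l _ => 2 * ((l.1 : ℝ) + 1) * K
  | .quad l _ => 4 * ((l.1 : ℝ) + 1) * K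

/-- The packing game of the instability construction: `packV n K rootW S` is the maximum
total weight of a packing of pairwise disjoint members of `𝒮` inside `S` (the empty
packing is allowed). -/
noncomputable def packV (n : ℕ) (K rootW : ℝ) (S : Finset (Player n)) : ℝ :=
  ((Finset.univ : Finset (Idx n)).powerset.filter (fun F =>
      (∀ j ∈ F, coal j ⊆ S) ∧
      ∀ j ∈ F, ∀ j' ∈ F, j ≠ j' → Disjoint (coal j) (coal j'))).sup'
    ⟨∅, by simp⟩ (fun F => ∑ j ∈ F, wt K rootW j)

/-- The sorted (non-decreasing) list of excesses `y(S) − v(S)` over all coalitions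
`S ⊆ P`. -/
noncomputable def excessList (n : ℕ) (v : Finset (Player n) → ℝ) (y : Player n → ℝ) :
    List ℝ :=
  ((Finset.univ : Finset (Player n)).powerset.val.map
    fun S => (∑ p ∈ S, y p) - v S).sort (· ≤ ·)

/-- Lexicographic order (`≤`) on lists of reals. -/
def lexLE (l₁ l₂ : List ℝ) : Prop := l₁ = l₂ ∨ List.Lex (· < ·) l₁ l₂

/-!
`ỹ` is nonnegative and every member of `𝒮` has nonnegative surplus under it, so `ỹ` lies in the
core: an allocation outside the core has a negative excess and already loses at threshold `0`.
An efficient core allocation `z` pays `r` and every pair `{p_i^{(l)}, q_i^{(l)}}` exactly, since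
these coalitions form an optimal packing of `P`. If `z ≠ ỹ`, let `m` be the lowest level at which
`z` and `ỹ` differ and `μ = ỹ(q_i^{(m)})`. The surpluses of `{r, p_i^{(1)}}` and of the
five-player coalitions, and the shares of lone players, grow with the level, so every coalition of
`ỹ`-excess below `μ` has the same excess under `z`; on the other hand one of `{q_i^{(m)}}`,
`{r, p_i^{(1)}}` or a five-player coalition has `z`-excess below `μ` but `ỹ`-excess at least `μ`.
Counting excesses below each threshold up to `μ` gives the lexicographic comparison.
-/

section Lex

variable {β : Type*} [LinearOrder β]

theorem List.lex_lt_of_countP_lt {t : β} :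
    ∀ {A B : List β}, A.Pairwise (· ≤ ·) → B.Pairwise (· ≤ ·) → A.length = B.length →
      B.countP (fun x => decide (x < t)) < A.countP (fun x => decide (x < t)) →
      (∀ s ≤ t, B.countP (fun x => decide (x < s)) ≤ A.countP (fun x => decide (x < s))) →
      List.Lex (· < ·) A B
  | [], _, _, _, hlen, hlt, _ => by simp [List.length_eq_zero_iff.mp hlen.symm] at hlt
  | _ :: _, [], _, _, hlen, _, _ => by simp at hlen
  | x :: A, y :: B, hA, hB, hlen, hlt, hle => by
    rw [List.pairwise_cons] at hA hB
    rcases lt_trichotomy x y with hxy | rfl | hyx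
    · exact .rel hxy
    · refine .cons (List.lex_lt_of_countP_lt (t := t) hA.2 hB.2 (by simpa using hlen) ?_
        fun s hs => ?_)
      · simpa [List.countP_cons] using hlt
      · simpa [List.countP_cons] using hle s hs
    · -- `A` has an entry below `t`, so its least entry `x` is; counting below `x` then favours `B`.
      exfalso
      obtain ⟨a, ha, hat⟩ := List.countP_pos_iff.mp (Nat.zero_lt_of_lt hlt)
      have hxa : x ≤ a := (List.mem_cons.mp ha).elim (fun h => h ▸ le_rfl) (hA.1 a)
      have hx := hle x (hxa.trans (of_decide_eq_true hat).le)
      have hA0 : (x :: A).countP (fun z => decide (z < x)) = 0 :=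
        List.countP_eq_zero.mpr fun a ha => by
          simpa using (List.mem_cons.mp ha).elim (fun h => h ▸ le_rfl) (hA.1 a)
      have hB0 : 0 < (y :: B).countP (fun z => decide (z < x)) :=
        List.countP_pos_iff.mpr ⟨y, List.mem_cons_self, by simpa using hyx⟩
      omega

theorem Finset.lex_sort_map_lt {α : Type*} (s : Finset α) (f g : α → β) (t : β)
    (hagree : ∀ a ∈ s, g a < t → f a = g a) (hwit : ∃ a ∈ s, f a < t ∧ t ≤ g a) :
    List.Lex (· < ·) ((s.val.map f).sort (· ≤ ·)) ((s.val.map g).sort (· ≤ ·)) := by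
  have hcount : ∀ (h : α → β) (u : β), ((s.val.map h).sort (· ≤ ·)).countP
      (fun x => decide (x < u)) = (s.filter (h · < u)).card := by
    intro h u
    rw [← Multiset.coe_countP, Multiset.sort_eq, Multiset.countP_map]
    rfl
  have hsub : ∀ u ≤ t, s.filter (g · < u) ⊆ s.filter (f · < u) := by
    intro u hu a
    simp only [Finset.mem_filter]
    exact fun ⟨ha, hga⟩ => ⟨ha, hagree a ha (hga.trans_le hu) ▸ hga⟩
  obtain ⟨w, hw, hfw, hgw⟩ := hwit
  refine List.lex_lt_of_countP_lt (t := t) (Multiset.pairwise_sort _ _)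
    (Multiset.pairwise_sort _ _) (by simp) ?_ fun u hu => ?_
  · rw [hcount, hcount]
    refine Finset.card_lt_card ((Finset.ssubset_iff_of_subset (hsub t le_rfl)).mpr ⟨w, ?_, ?_⟩)
    · simpa [hw] using hfw
    · simpa using fun _ => hgw
  · rw [hcount, hcount]
    exact Finset.card_le_card (hsub u hu)

end Lex

open Finset

section Packing

variable {n : ℕ} {K w : ℝ}

def IsPacking (S : Finset (Player n)) (F : Finset (Idx n)) : Prop :=
  (∀ j ∈ F, coal j ⊆ S) ∧ ∀ j ∈ F, ∀ j' ∈ F, j ≠ j' → Disjoint (coal j) (coal j')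

noncomputable def surplus (K w : ℝ) (u : Player n → ℝ) (j : Idx n) : ℝ :=
  ∑ x ∈ coal j, u x - wt K w j

noncomputable def excess (K w : ℝ) (u : Player n → ℝ) (S : Finset (Player n)) : ℝ :=
  ∑ x ∈ S, u x - packV n K w S

lemma sum_wt_le_packV {S : Finset (Player n)} {F : Finset (Idx n)} (hF : IsPacking S F) :
    ∑ j ∈ F, wt K w j ≤ packV n K w S :=
  le_sup' (fun F => ∑ j ∈ F, wt K w j) (by simpa [IsPacking] using hF)

lemma exists_isPacking_packV_eq (S : Finset (Player n)) :
    ∃ F, IsPacking S F ∧ packV n K w S = ∑ j ∈ F, wt K w j := by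
  unfold packV
  generalize_proofs hne
  obtain ⟨F, hF, hv⟩ := exists_mem_eq_sup' hne fun F : Finset (Idx n) => ∑ j ∈ F, wt K w j
  exact ⟨F, (mem_filter.mp hF).2, hv⟩

lemma isPacking_empty (S : Finset (Player n)) : IsPacking S ∅ := by
  simp [IsPacking]

lemma isPacking_coal_singleton (j : Idx n) : IsPacking (coal j) {j} := by
  simp [IsPacking]

lemma packV_nonneg (S : Finset (Player n)) : 0 ≤ packV n K w S := by
  simpa using sum_wt_le_packV (K := K) (w := w) (isPacking_empty S)

lemma wt_le_packV_coal (j : Idx n) : wt K w j ≤ packV n K w (coal j) := by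
  simpa using sum_wt_le_packV (K := K) (w := w) (isPacking_coal_singleton j)

lemma IsPacking.sum_eq {S : Finset (Player n)} {F : Finset (Idx n)} (hF : IsPacking S F)
    (f : Player n → ℝ) :
    ∑ x ∈ S, f x = ∑ j ∈ F, ∑ x ∈ coal j, f x + ∑ x ∈ S \ F.biUnion coal, f x := by
  have hdisj : (F : Set (Idx n)).PairwiseDisjoint coal := fun a ha b hb hab => hF.2 a ha b hb hab
  rw [← sum_biUnion hdisj, ← sum_sdiff (biUnion_subset.mpr hF.1), add_comm]

lemma excess_eq_of_packV_eq (u : Player n → ℝ) {S : Finset (Player n)} {F : Finset (Idx n)}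
    (hF : IsPacking S F) (hv : packV n K w S = ∑ j ∈ F, wt K w j) :
    excess K w u S = ∑ j ∈ F, surplus K w u j + ∑ x ∈ S \ F.biUnion coal, u x := by
  simp only [excess, surplus, hF.sum_eq u, hv, sum_sub_distrib]
  ring

section Nonneg

variable {u : Player n → ℝ}

lemma excess_nonneg (hu : ∀ x, 0 ≤ u x) (hs : ∀ j, 0 ≤ surplus K w u j)
    (S : Finset (Player n)) : 0 ≤ excess K w u S := by
  obtain ⟨F, hF, hv⟩ := exists_isPacking_packV_eq (K := K) (w := w) S
  rw [excess_eq_of_packV_eq u hF hv]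
  exact add_nonneg (sum_nonneg fun j _ => hs j) (sum_nonneg fun x _ => hu x)

lemma exists_isPacking_of_excess_lt (hu : ∀ x, 0 ≤ u x) (hs : ∀ j, 0 ≤ surplus K w u j)
    {S : Finset (Player n)} {t : ℝ} (hS : excess K w u S < t) :
    ∃ F, IsPacking S F ∧ (∀ j ∈ F, surplus K w u j < t) ∧
      ∀ x ∈ S \ F.biUnion coal, u x < t := by
  obtain ⟨F, hF, hv⟩ := exists_isPacking_packV_eq (K := K) (w := w) S
  rw [excess_eq_of_packV_eq u hF hv] at hS
  have hF0 := sum_nonneg fun j (_ : j ∈ F) => hs j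
  have hL0 := sum_nonneg fun x (_ : x ∈ S \ F.biUnion coal) => hu x
  refine ⟨F, hF, fun j hj => ?_, fun x hx => ?_⟩
  · linarith [single_le_sum (fun j _ => hs j) hj]
  · linarith [single_le_sum (fun x _ => hu x) hx]

lemma le_excess_of_mem (hu : ∀ x, 0 ≤ u x) (hs : ∀ j, 0 ≤ surplus K w u j)
    {S : Finset (Player n)} {x : Player n} {t : ℝ} (hx : x ∈ S)
    (hxt : t ≤ u x) (hcoal : ∀ j, x ∈ coal j → coal j ⊆ S → t ≤ surplus K w u j) :
    t ≤ excess K w u S := by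
  by_contra! hS
  obtain ⟨F, hF, hsF, hleft⟩ := exists_isPacking_of_excess_lt hu hs hS
  by_cases hxF : x ∈ F.biUnion coal
  · obtain ⟨j, hj, hxj⟩ := mem_biUnion.mp hxF
    exact (hcoal j hxj (hF.1 j hj)).not_gt (hsF j hj)
  · exact hxt.not_gt (hleft x (mem_sdiff.mpr ⟨hx, hxF⟩))

lemma sum_eq_zero_of_excess_lt (hu : ∀ x, 0 ≤ u x) (hs : ∀ j, 0 ≤ surplus K w u j)
    {S : Finset (Player n)} {t : ℝ} (hS : excess K w u S < t)
    (d : Player n → ℝ) (hd : ∀ x, u x < t → d x = 0)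
    (hdc : ∀ j, surplus K w u j < t → ∑ x ∈ coal j, d x = 0) :
    ∑ x ∈ S, d x = 0 := by
  obtain ⟨F, hF, hsF, hleft⟩ := exists_isPacking_of_excess_lt hu hs hS
  rw [hF.sum_eq d, sum_eq_zero fun j hj => hdc j (hsF j hj),
    sum_eq_zero fun x hx => hd x (hleft x hx), add_zero]

end Nonneg

lemma sum_coal_eq_wt_of_core {z : Player n → ℝ}
    (hcore : ∀ S, packV n K w S ≤ ∑ x ∈ S, z x) {S : Finset (Player n)}
    (hz : ∑ x ∈ S, z x = packV n K w S) {F : Finset (Idx n)} (hF : IsPacking S F)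
    (hv : packV n K w S = ∑ j ∈ F, wt K w j) {j : Idx n} (hj : j ∈ F) :
    ∑ x ∈ coal j, z x = wt K w j := by
  have hs : ∀ j, 0 ≤ surplus K w z j := fun j =>
    sub_nonneg.mpr ((wt_le_packV_coal j).trans (hcore (coal j)))
  have h0 : excess K w z S = 0 := sub_eq_zero.mpr hz
  rw [excess_eq_of_packV_eq z hF hv] at h0
  have hL : 0 ≤ ∑ x ∈ S \ F.biUnion coal, z x := (packV_nonneg _).trans (hcore _)
  have hsum : ∑ j ∈ F, surplus K w z j = 0 :=
    le_antisymm (by linarith) (sum_nonneg fun j _ => hs j)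
  exact sub_eq_zero.mp ((sum_eq_zero_iff_of_nonneg fun j _ => hs j).mp hsum j hj)

end Packing

section SumCoal

variable {n : ℕ} {M : Type*} [AddCommMonoid M] (f : Player n → M)

lemma sum_coal_root : ∑ x ∈ coal (.root : Idx n), f x = f .r := by simp [coal]

lemma sum_coal_rootP (i : Fin 4) : ∑ x ∈ coal (.rootP i : Idx n), f x = f .r + f (.p 0 i) := by
  simp [coal]

lemma sum_coal_pair (l : Fin (n + 2)) (i : Fin 4) :
    ∑ x ∈ coal (.pair l i : Idx n), f x = f (.p l i) + f (.q l i) := by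
  simp [coal]

lemma sum_coal_quad (l : Fin (n + 1)) (i : Fin 4) :
    ∑ x ∈ coal (.quad l i : Idx n), f x = f (.q l.castSucc 0) + f (.q l.castSucc 1) +
      f (.q l.castSucc 2) + f (.q l.castSucc 3) + f (.p l.succ i) := by
  simp [coal, Fin.ext_iff, add_assoc]

end SumCoal

section Construction

variable {n : ℕ} {ε K : ℝ}

noncomputable def qShare (ε K : ℝ) (l : Fin (n + 2)) : ℝ :=
  ((l.1 : ℝ) + 1) * K - 2 ^ ((l.1 : ℤ) - 1) * ε

noncomputable def yTilde (n : ℕ) (ε K : ℝ) : Player n → ℝ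
  | .r => 1 - ε
  | .p l _ => ((l.1 : ℝ) + 1) * K + 2 ^ ((l.1 : ℤ) - 1) * ε
  | .q l _ => qShare ε K l

lemma zpow_mul_le (hε0 : 0 < ε) (hK : 2 ^ n * ε ≤ K) (l : Fin (n + 2)) :
    (2 : ℝ) ^ ((l.1 : ℤ) - 1) * ε ≤ K := by
  refine le_trans ?_ hK
  rw [← zpow_natCast]
  gcongr
  · norm_num
  · omega

lemma qShare_nonneg (hε0 : 0 < ε) (hK : 2 ^ n * ε ≤ K) (l : Fin (n + 2)) :
    0 ≤ qShare ε K l := by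
  have h := zpow_mul_le hε0 hK l
  have hl : (0 : ℝ) ≤ l.1 := l.1.cast_nonneg
  have hK0 : 0 ≤ K := le_trans (by positivity) h
  unfold qShare
  nlinarith

lemma qShare_monotone (hε0 : 0 < ε) (hK : 2 ^ n * ε ≤ K) :
    Monotone (qShare ε K : Fin (n + 2) → ℝ) := by
  intro l l' hll'
  rcases hll'.eq_or_lt with rfl | hlt
  · rfl
  have h := zpow_mul_le hε0 hK l'
  have h0 : 0 < (2 : ℝ) ^ ((l.1 : ℤ) - 1) * ε := by positivity
  have hl : (l.1 : ℝ) + 1 ≤ l'.1 := by exact_mod_cast hlt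
  have hK0 : 0 ≤ K := le_trans h0.le (zpow_mul_le hε0 hK l)
  unfold qShare
  nlinarith

lemma qShare_le_yTilde_p (hε0 : 0 < ε) (l : Fin (n + 2)) (i : Fin 4) :
    qShare ε K l ≤ yTilde n ε K (.p l i) := by
  have : 0 < (2 : ℝ) ^ ((l.1 : ℤ) - 1) * ε := by positivity
  simp only [qShare, yTilde]
  linarith

lemma yTilde_nonneg (hε0 : 0 < ε) (hε1 : ε ≤ 1) (hK : 2 ^ n * ε ≤ K) (x : Player n) :
    0 ≤ yTilde n ε K x := by
  cases x with
  | r => exact sub_nonneg.mpr hε1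
  | p l i => exact (qShare_nonneg hε0 hK l).trans (qShare_le_yTilde_p hε0 l i)
  | q l i => exact qShare_nonneg hε0 hK l

lemma surplus_yTilde_root : surplus K (1 - ε) (yTilde n ε K) .root = 0 := by
  simp [surplus, sum_coal_root, yTilde, wt]

lemma surplus_yTilde_rootP (i : Fin 4) :
    surplus K (1 - ε) (yTilde n ε K) (.rootP i) = qShare ε K (0 : Fin (n + 2)) := by
  simp only [surplus, sum_coal_rootP, yTilde, wt, qShare, Fin.val_zero]
  norm_num
  ring

lemma surplus_yTilde_pair (l : Fin (n + 2)) (i : Fin 4) :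
    surplus K (1 - ε) (yTilde n ε K) (.pair l i) = 0 := by
  simp only [surplus, sum_coal_pair, yTilde, wt, qShare]
  ring

lemma surplus_yTilde_quad (l : Fin (n + 1)) (i : Fin 4) :
    surplus K (1 - ε) (yTilde n ε K) (.quad l i) = qShare ε K l.succ := by
  simp only [surplus, sum_coal_quad, yTilde, wt, qShare, Fin.val_castSucc, Fin.val_succ]
  have h2 : (2 : ℝ) ^ ((l.1 : ℤ) - 1) = 2 ^ (l.1 : ℤ) / 2 := by
    rw [zpow_sub₀ two_ne_zero, zpow_one]
  push_cast
  rw [add_sub_cancel_right, h2]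
  ring

lemma surplus_yTilde_nonneg (hε0 : 0 < ε) (hK : 2 ^ n * ε ≤ K) (j : Idx n) :
    0 ≤ surplus K (1 - ε) (yTilde n ε K) j := by
  cases j with
  | root => exact surplus_yTilde_root.ge
  | rootP i => exact surplus_yTilde_rootP i ▸ qShare_nonneg hε0 hK 0
  | pair l i => exact (surplus_yTilde_pair l i).ge
  | quad l i => exact surplus_yTilde_quad l i ▸ qShare_nonneg hε0 hK l.succ

lemma packV_le_sum_yTilde (hε0 : 0 < ε) (hε1 : ε ≤ 1) (hK : 2 ^ n * ε ≤ K)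
    (S : Finset (Player n)) : packV n K (1 - ε) S ≤ ∑ x ∈ S, yTilde n ε K x :=
  sub_nonneg.mp (excess_nonneg (yTilde_nonneg hε0 hε1 hK) (surplus_yTilde_nonneg hε0 hK) S)

def pairPacking (n : ℕ) : Finset (Idx n) :=
  insert .root (univ.image fun li : Fin (n + 2) × Fin 4 => .pair li.1 li.2)

lemma mem_pairPacking {j : Idx n} : j ∈ pairPacking n ↔ j = .root ∨ ∃ l i, j = .pair l i := by
  simp [pairPacking, eq_comm]

lemma isPacking_pairPacking : IsPacking univ (pairPacking n) := by
  refine ⟨fun _ _ => subset_univ _, fun j hj j' hj' hne => ?_⟩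
  rw [mem_pairPacking] at hj hj'
  rcases hj with rfl | ⟨l, i, rfl⟩ <;> rcases hj' with rfl | ⟨l', i', rfl⟩
  · exact absurd rfl hne
  all_goals simp_all [coal, disjoint_left]

lemma biUnion_pairPacking : (pairPacking n).biUnion coal = univ := by
  refine eq_univ_of_forall fun x => mem_biUnion.mpr ?_
  cases x with
  | r => exact ⟨.root, by simp [mem_pairPacking], by simp [coal]⟩
  | p l i => exact ⟨.pair l i, by simp [mem_pairPacking], by simp [coal]⟩
  | q l i => exact ⟨.pair l i, by simp [mem_pairPacking], by simp [coal]⟩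

lemma sum_yTilde_eq_sum_wt_pairPacking :
    ∑ x, yTilde n ε K x = ∑ j ∈ pairPacking n, wt K (1 - ε) j := by
  rw [isPacking_pairPacking.sum_eq, biUnion_pairPacking, Finset.sdiff_self, sum_empty, add_zero]
  refine sum_congr rfl fun j hj => sub_eq_zero.mp ?_
  rcases mem_pairPacking.mp hj with rfl | ⟨l, i, rfl⟩
  · exact surplus_yTilde_root
  · exact surplus_yTilde_pair l i

lemma packV_univ_eq_sum_yTilde (hε0 : 0 < ε) (hε1 : ε ≤ 1) (hK : 2 ^ n * ε ≤ K) :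
    packV n K (1 - ε) univ = ∑ x, yTilde n ε K x :=
  (packV_le_sum_yTilde hε0 hε1 hK univ).antisymm
    (sum_yTilde_eq_sum_wt_pairPacking.trans_le (sum_wt_le_packV isPacking_pairPacking))

lemma eq_yTilde_on_pairPacking (hε0 : 0 < ε) (hε1 : ε ≤ 1) (hK : 2 ^ n * ε ≤ K) {z : Player n → ℝ}
    (hcore : ∀ S, packV n K (1 - ε) S ≤ ∑ x ∈ S, z x)
    (hz : ∑ x, z x = packV n K (1 - ε) univ) :
    z .r = yTilde n ε K .r ∧
      ∀ l i, z (.p l i) + z (.q l i) = yTilde n ε K (.p l i) + yTilde n ε K (.q l i) := by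
  have hv := (packV_univ_eq_sum_yTilde hε0 hε1 hK).trans sum_yTilde_eq_sum_wt_pairPacking
  have htight := fun j => sum_coal_eq_wt_of_core hcore hz isPacking_pairPacking hv (j := j)
  refine ⟨?_, fun l i => ?_⟩
  · simpa [sum_coal_root, wt, yTilde] using htight .root (by simp [mem_pairPacking])
  · have h := htight (.pair l i) (by simp [mem_pairPacking])
    have hy := surplus_yTilde_pair (ε := ε) (K := K) l i
    rw [sum_coal_pair] at h
    rw [surplus, sum_coal_pair] at hy
    linarith

lemma exists_min_level_ne {z : Player n → ℝ} (hr : z .r = yTilde n ε K .r)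
    (hpair : ∀ l i, z (.p l i) + z (.q l i) = yTilde n ε K (.p l i) + yTilde n ε K (.q l i))
    (hne : z ≠ yTilde n ε K) :
    ∃ m i, z (.p m i) ≠ yTilde n ε K (.p m i) ∧ ∀ l < m, ∀ i,
      z (.p l i) = yTilde n ε K (.p l i) ∧ z (.q l i) = yTilde n ε K (.q l i) := by
  have hex : ∃ l i, z (.p l i) ≠ yTilde n ε K (.p l i) := by
    by_contra! h
    refine hne (funext fun x => ?_)
    cases x with
    | r => exact hr
    | p l i => exact h l i
    | q l i => linarith [hpair l i, h l i]
  obtain ⟨m, ⟨i, hi⟩, hmin⟩ :=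
    wellFounded_lt.has_min {l | ∃ i, z (.p l i) ≠ yTilde n ε K (.p l i)} hex
  refine ⟨m, i, hi, fun l hl i' => ?_⟩
  have hp : z (.p l i') = yTilde n ε K (.p l i') := by
    by_contra h
    exact hmin l ⟨i', h⟩ hl
  exact ⟨hp, by linarith [hpair l i']⟩

/-- An optimal packing of a coalition of `ỹ`-excess below `qShare ε K m` uses only `{r}`, pairs,
and coalitions of levels below `m`, and leaves only players of levels below `m` uncovered; `z`
and `ỹ` agree on all of these. -/
lemma sum_eq_sum_yTilde_of_excess_lt (hε0 : 0 < ε) (hε1 : ε ≤ 1) (hK : 2 ^ n * ε ≤ K)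
    {z : Player n → ℝ} (hr : z .r = yTilde n ε K .r)
    (hpair : ∀ l i, z (.p l i) + z (.q l i) = yTilde n ε K (.p l i) + yTilde n ε K (.q l i))
    {m : Fin (n + 2)} (hbelow : ∀ l < m, ∀ i,
      z (.p l i) = yTilde n ε K (.p l i) ∧ z (.q l i) = yTilde n ε K (.q l i))
    {S : Finset (Player n)} (hS : excess K (1 - ε) (yTilde n ε K) S < qShare ε K m) :
    ∑ x ∈ S, z x = ∑ x ∈ S, yTilde n ε K x := by
  have hmono := qShare_monotone hε0 hK
  have h := sum_eq_zero_of_excess_lt (yTilde_nonneg hε0 hε1 hK) (surplus_yTilde_nonneg hε0 hK)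
    hS (z - yTilde n ε K) (fun x hx => ?_) (fun j hj => ?_)
  · simpa only [Pi.sub_apply, sum_sub_distrib, sub_eq_zero] using h
  · cases x with
    | r => simp [hr]
    | p l i =>
      simp [(hbelow l (hmono.reflect_lt ((qShare_le_yTilde_p hε0 l i).trans_lt hx)) i).1]
    | q l i => simp [(hbelow l (hmono.reflect_lt hx) i).2]
  · cases j with
    | root => simp [sum_coal_root, hr]
    | rootP i =>
      rw [surplus_yTilde_rootP] at hj
      simp [sum_coal_rootP, hr, (hbelow 0 (hmono.reflect_lt hj) i).1]
    | pair l i =>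
      rw [sum_coal_pair, Pi.sub_apply, Pi.sub_apply]
      linarith [hpair l i]
    | quad l i =>
      rw [surplus_yTilde_quad] at hj
      have hs := hmono.reflect_lt hj
      have hc := fun i' => (hbelow _ (Fin.castSucc_lt_succ.trans hs) i').2
      simp [sum_coal_quad, hc, (hbelow _ hs i).1]

lemma qShare_le_excess_of_p_mem (hε0 : 0 < ε) (hε1 : ε ≤ 1) (hK : 2 ^ n * ε ≤ K)
    {S : Finset (Player n)} {m : Fin (n + 2)} {i : Fin 4} (hp : .p m i ∈ S) (hq : .q m i ∉ S) :
    qShare ε K m ≤ excess K (1 - ε) (yTilde n ε K) S := by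
  refine le_excess_of_mem (yTilde_nonneg hε0 hε1 hK) (surplus_yTilde_nonneg hε0 hK) hp
    (qShare_le_yTilde_p hε0 m i) fun j hj hjS => ?_
  cases j with
  | root => simp [coal] at hj
  | rootP i' =>
    obtain ⟨rfl, -⟩ : m = 0 ∧ i = i' := by simpa [coal] using hj
    exact (surplus_yTilde_rootP i').ge
  | pair l i' =>
    obtain ⟨rfl, rfl⟩ : m = l ∧ i = i' := by simpa [coal] using hj
    exact absurd (hjS (by simp [coal])) hq
  | quad l i' =>
    obtain ⟨rfl, -⟩ : m = l.succ ∧ i = i' := by simpa [coal] using hj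
    exact (surplus_yTilde_quad l i').ge

lemma qShare_le_excess_of_q_mem (hε0 : 0 < ε) (hε1 : ε ≤ 1) (hK : 2 ^ n * ε ≤ K)
    {S : Finset (Player n)} {m : Fin (n + 2)} {i : Fin 4} (hq : .q m i ∈ S) (hp : .p m i ∉ S) :
    qShare ε K m ≤ excess K (1 - ε) (yTilde n ε K) S := by
  refine le_excess_of_mem (yTilde_nonneg hε0 hε1 hK) (surplus_yTilde_nonneg hε0 hK) hq le_rfl
    fun j hj hjS => ?_
  cases j with
  | root => simp [coal] at hj
  | rootP i' => simp [coal] at hj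
  | pair l i' =>
    obtain ⟨rfl, rfl⟩ : m = l ∧ i = i' := by simpa [coal] using hj
    exact absurd (hjS (by simp [coal])) hp
  | quad l i' =>
    obtain rfl : m = l.castSucc := by
      simp only [coal, mem_insert, mem_singleton, Player.q.injEq, reduceCtorEq, or_false] at hj
      rcases hj with ⟨h, -⟩ | ⟨h, -⟩ | ⟨h, -⟩ | ⟨h, -⟩ <;> exact h
    rw [surplus_yTilde_quad]
    exact qShare_monotone hε0 hK (Fin.castSucc_le_succ l)

lemma exists_excess_lt_qShare_le (hε0 : 0 < ε) (hε1 : ε ≤ 1) (hK : 2 ^ n * ε ≤ K)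
    {z : Player n → ℝ} (hr : z .r = yTilde n ε K .r)
    (hpair : ∀ l i, z (.p l i) + z (.q l i) = yTilde n ε K (.p l i) + yTilde n ε K (.q l i))
    {m : Fin (n + 2)} (hbelow : ∀ l < m, ∀ i,
      z (.p l i) = yTilde n ε K (.p l i) ∧ z (.q l i) = yTilde n ε K (.q l i))
    {i : Fin 4} (hne : z (.p m i) ≠ yTilde n ε K (.p m i)) :
    ∃ S, excess K (1 - ε) z S < qShare ε K m ∧
      qShare ε K m ≤ excess K (1 - ε) (yTilde n ε K) S := by
  rcases hne.lt_or_gt with hlt | hgt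
  · obtain ⟨j, hpj, hqj, hsj, hzj⟩ : ∃ j : Idx n, .p m i ∈ coal j ∧ .q m i ∉ coal j ∧
        surplus K (1 - ε) (yTilde n ε K) j = qShare ε K m ∧
        ∑ x ∈ coal j, z x < ∑ x ∈ coal j, yTilde n ε K x := by
      cases m using Fin.cases with
      | zero =>
        refine ⟨.rootP i, by simp [coal], by simp [coal], surplus_yTilde_rootP i, ?_⟩
        rw [sum_coal_rootP, sum_coal_rootP, hr]
        linarith
      | succ k =>
        have hk := fun i' => (hbelow k.castSucc Fin.castSucc_lt_succ i').2
        refine ⟨.quad k i, by simp [coal], by simp [coal, Fin.castSucc_lt_succ.ne'],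
          surplus_yTilde_quad k i, ?_⟩
        rw [sum_coal_quad, sum_coal_quad, hk 0, hk 1, hk 2, hk 3]
        linarith
    refine ⟨coal j, ?_, qShare_le_excess_of_p_mem hε0 hε1 hK hpj hqj⟩
    calc excess K (1 - ε) z (coal j) ≤ ∑ x ∈ coal j, z x - wt K (1 - ε) j :=
          sub_le_sub_left (wt_le_packV_coal j) _
      _ < surplus K (1 - ε) (yTilde n ε K) j := sub_lt_sub_right hzj _
      _ = qShare ε K m := hsj
  · refine ⟨{.q m i}, ?_, qShare_le_excess_of_q_mem hε0 hε1 hK (mem_singleton_self _) (by simp)⟩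
    have hv := packV_nonneg (K := K) (w := 1 - ε) {Player.q m i}
    have hq : yTilde n ε K (.q m i) = qShare ε K m := rfl
    rw [excess, sum_singleton]
    linarith [hpair m i]

end Construction

/-- The allocation `ỹ` with `ỹ(r) = 1 − ε`,
`ỹ(p_i^{(l)}) = l·K + 2^{l−2}·ε` and `ỹ(q_i^{(l)}) = l·K − 2^{l−2}·ε` is the nucleolus of
the perturbed packing game `(P, ṽ)` (root weight `1 − ε`, with `0 < ε ≤ 1` and
`K ≥ 2^n·ε`): it is efficient, and its sorted excess vector is lexicographically maximal
among all efficient allocations. -/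
theorem stmt17 (n : ℕ) (ε K : ℝ) (hε0 : 0 < ε) (hε1 : ε ≤ 1) (hK : 2 ^ n * ε ≤ K)
    (yt : Player n → ℝ)
    (hyr : yt Player.r = 1 - ε)
    (hyp : ∀ (l : Fin (n + 2)) (i : Fin 4),
      yt (Player.p l i) = ((l.1 : ℝ) + 1) * K + 2 ^ ((l.1 : ℤ) - 1) * ε)
    (hyq : ∀ (l : Fin (n + 2)) (i : Fin 4),
      yt (Player.q l i) = ((l.1 : ℝ) + 1) * K - 2 ^ ((l.1 : ℤ) - 1) * ε) :
    (∑ p, yt p) = packV n K (1 - ε) Finset.univ ∧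
    ∀ z : Player n → ℝ, (∑ p, z p) = packV n K (1 - ε) Finset.univ →
      lexLE (excessList n (packV n K (1 - ε)) z) (excessList n (packV n K (1 - ε)) yt) := by
  obtain rfl : yt = yTilde n ε K := funext fun x => by
    cases x with
    | r => exact hyr
    | p l i => exact hyp l i
    | q l i => exact hyq l i
  refine ⟨(packV_univ_eq_sum_yTilde hε0 hε1 hK).symm, fun z hz => ?_⟩
  have hy0 := excess_nonneg (yTilde_nonneg hε0 hε1 hK) (surplus_yTilde_nonneg hε0 hK)
  by_cases hcore : ∀ S, packV n K (1 - ε) S ≤ ∑ x ∈ S, z x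
  · obtain ⟨hr, hpair⟩ := eq_yTilde_on_pairPacking hε0 hε1 hK hcore hz
    by_cases hzy : z = yTilde n ε K
    · exact .inl (hzy ▸ rfl)
    obtain ⟨m, i, hne, hbelow⟩ := exists_min_level_ne hr hpair hzy
    obtain ⟨W, hWz, hWy⟩ := exists_excess_lt_qShare_le hε0 hε1 hK hr hpair hbelow hne
    refine .inr (univ.powerset.lex_sort_map_lt (excess K (1 - ε) z)
      (excess K (1 - ε) (yTilde n ε K)) (qShare ε K m) (fun S _ hS => ?_)
      ⟨W, mem_powerset.mpr (subset_univ W), hWz, hWy⟩)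
    rw [excess, excess, sum_eq_sum_yTilde_of_excess_lt hε0 hε1 hK hr hpair hbelow hS]
  · obtain ⟨S, hS⟩ := not_forall.mp hcore
    exact .inr (univ.powerset.lex_sort_map_lt (excess K (1 - ε) z)
      (excess K (1 - ε) (yTilde n ε K)) 0 (fun S _ hS => absurd hS (hy0 S).not_gt)
      ⟨S, mem_powerset.mpr (subset_univ S), sub_neg.mpr (not_le.mp hS), hy0 S⟩)
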